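/- Fix an integer l ≥ 2, let ζ = e^{2πi/l}, ω = e^{πi/l}, let P ∈ M_l(ℂ) be the cyclic permutation matrix (P_{i,i+1} = 1 for 1 ≤ i ≤ l−1, P_{l,1} = 1, other entries 0) and Q = diag(ζ, ζ², …, ζ^l), and for r, m ∈ ℤ set a_{r,m} = ω^{rm}·Q^r·P^m and d_{r,m} = a_{r,m} − ζ^r·a_{−r,m}. Let T ∈ M_l(ℂ) be the matrix with T_{i, l+1−i} = 1 for 1 ≤ i ≤ l and all other entries 0. Then span_ℂ{ d_{r,m} : r, m ∈ ℤ } = { X ∈ M_l(ℂ) : Xᵀ·T = −T·X }; this set is a Lie subalgebra of gl_l(ℂ) of dimension l(l−1)/2, and it is isomorphic as a complex Lie algebra to the orthogonal Lie algebra so(l,ℂ) = { X ∈ M_l(ℂ) : Xᵀ = −X } (the simple Lie algebra of type B_{(l−1)/2} if l is odd, and of type D_{l/2} if l is even). -/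

import Mathlib

open Complex Matrix

/-- The `l×l` complex matrix algebra, with rows and columns indexed cyclically. -/
abbrev MatL (l : ℕ) := Matrix (ZMod l) (ZMod l) ℂ

/-- `ζ = e^{2πi/l}`. -/
noncomputable def zetaL (l : ℕ) : ℂ := Complex.exp (2 * Real.pi * Complex.I / l)

/-- The cyclic permutation matrix `P` (with `P_{i,i+1} = 1` cyclically). -/
noncomputable def Pmat (l : ℕ) : MatL l :=
  Matrix.of fun i j => if j = i + 1 then (1 : ℂ) else 0

/-- The diagonal matrix `Q = diag(ζ, ζ², …, ζ^l)`. -/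
noncomputable def Qmat (l : ℕ) : MatL l :=
  Matrix.of fun i j => if i = j then zetaL l ^ (i.val + 1) else 0

/-- `ω = e^{πi/l}`. -/
noncomputable def omegaL (l : ℕ) : ℂ := Complex.exp (Real.pi * Complex.I / l)

/-- The matrices `a_{r,m} = ω^{rm} · Q^r · P^m` for `r, m ∈ ℤ`. -/
noncomputable def amat (l : ℕ) [NeZero l] (r m : ℤ) : MatL l :=
  omegaL l ^ (r * m) • (Qmat l ^ r * Pmat l ^ m)


/-- `d_{r,m} = a_{r,m} − ζ^r a_{−r,m}`. -/
noncomputable def dmat (l : ℕ) [NeZero l] (r m : ℤ) : MatL l :=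
  amat l r m - (zetaL l ^ r) • amat l (-r) m

/-- For a fixed matrix `T`, the linear map `X ↦ Xᵀ·T + T·X`, whose kernel is the space of
matrices with `Xᵀ·T = −T·X`. -/
noncomputable def skewPair {n : Type*} [Fintype n] (T : Matrix n n ℂ) :
    Matrix n n ℂ →ₗ[ℂ] Matrix n n ℂ where
  toFun X := Xᵀ * T + T * X
  map_add' X Y := by
    simp only [Matrix.transpose_add, Matrix.add_mul, Matrix.mul_add]
    abel
  map_smul' c X := by
    simp [Matrix.transpose_smul, Matrix.smul_mul, Matrix.mul_smul]

/-- The linear map `X ↦ Xᵀ + X`, whose kernel is `so(l,ℂ) = {X : Xᵀ = −X}`. -/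
noncomputable def transAdd {n : Type*} : Matrix n n ℂ →ₗ[ℂ] Matrix n n ℂ where
  toFun X := Xᵀ + X
  map_add' X Y := by
    simp only [Matrix.transpose_add]
    abel
  map_smul' c X := by
    simp [Matrix.transpose_smul]

/-- The antidiagonal matrix `T` with `T_{i,l+1−i} = 1` (1-indexed). -/
noncomputable def Tmat (l : ℕ) : MatL l :=
  Matrix.of fun i j => if i.val + j.val + 1 = l then (1 : ℂ) else 0

/-!
For a symmetric involution `T`, the map `X ↦ X - T Xᵀ T` takes values in
`{X : Xᵀ T = -T X}` and is twice the identity there, so its range is exactly that space. Here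
`T a_{r,m}ᵀ T = ζ^r a_{-r,m}`, so this map sends `a_{r,m}` to `d_{r,m}`; and the `a_{r,m}` span
`M_l(ℂ)`, since discrete Fourier inversion on `ZMod l` writes every matrix unit through them.
Hence the `d_{r,m}` span the kernel.

The matrix `V = ((1 + i)/2)(1 - i T)` squares to `T`, so `Vᵀ T V = 1`, and conjugation by `V`
identifies the `T`-skew-adjoint matrices with `so(l, ℂ)` as Lie algebras. A skew-symmetric matrix
is determined by its entries above the diagonal, which gives the dimension `l(l-1)/2`.
-/

section SkewAdjoint

variable {n : Type*} [Fintype n]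

theorem mem_ker_skewPair_iff {T X : Matrix n n ℂ} :
    X ∈ LinearMap.ker (skewPair T) ↔ Xᵀ * T + T * X = 0 := Iff.rfl

def skewPart (T : Matrix n n ℂ) : Matrix n n ℂ →ₗ[ℂ] Matrix n n ℂ where
  toFun X := X - T * Xᵀ * T
  map_add' X Y := by
    simp only [Matrix.transpose_add, Matrix.mul_add, Matrix.add_mul]
    abel
  map_smul' c X := by
    simp [Matrix.transpose_smul, smul_sub]

variable [DecidableEq n]

theorem range_skewPart {T : Matrix n n ℂ} (hT : Tᵀ = T) (hT2 : T * T = 1) :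
    LinearMap.range (skewPart T) = LinearMap.ker (skewPair T) := by
  apply le_antisymm
  · rintro _ ⟨X, rfl⟩
    rw [mem_ker_skewPair_iff]
    change (X - T * Xᵀ * T)ᵀ * T + T * (X - T * Xᵀ * T) = 0
    rw [Matrix.transpose_sub, Matrix.transpose_mul, Matrix.transpose_mul, hT,
      Matrix.transpose_transpose]
    calc (Xᵀ - T * (X * T)) * T + T * (X - T * Xᵀ * T)
        = Xᵀ * T - T * X * (T * T) + T * X - (T * T) * Xᵀ * T := by noncomm_ring
      _ = 0 := by rw [hT2]; noncomm_ring
  · intro X hX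
    rw [mem_ker_skewPair_iff, add_eq_zero_iff_eq_neg] at hX
    refine ⟨(2 : ℂ)⁻¹ • X, ?_⟩
    change (2 : ℂ)⁻¹ • X - T * ((2 : ℂ)⁻¹ • X)ᵀ * T = X
    rw [Matrix.transpose_smul, Matrix.mul_smul, Matrix.smul_mul, Matrix.mul_assoc, hX,
      Matrix.mul_neg, ← Matrix.mul_assoc, hT2, Matrix.one_mul, smul_neg, sub_neg_eq_add,
      ← add_smul]
    norm_num

theorem ker_skewPair (T : Matrix n n ℂ) :
    LinearMap.ker (skewPair T) = skewAdjointMatricesSubmodule T := by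
  ext X
  rw [mem_ker_skewPair_iff, mem_skewAdjointMatricesSubmodule, Matrix.IsSkewAdjoint,
    Matrix.IsAdjointPair, Matrix.mul_neg, add_eq_zero_iff_eq_neg]

theorem ker_transAdd : LinearMap.ker (transAdd (n := n)) = skewAdjointMatricesSubmodule 1 := by
  ext X
  rw [mem_skewAdjointMatricesSubmodule, Matrix.IsSkewAdjoint, Matrix.IsAdjointPair,
    Matrix.mul_one, Matrix.one_mul, LinearMap.mem_ker, ← add_eq_zero_iff_eq_neg]
  rfl

theorem commutator_mem_ker_skewPair {T X Y : Matrix n n ℂ} (hX : X ∈ LinearMap.ker (skewPair T))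
    (hY : Y ∈ LinearMap.ker (skewPair T)) : X * Y - Y * X ∈ LinearMap.ker (skewPair T) := by
  rw [ker_skewPair] at *
  exact T.isSkewAdjoint_bracket hX hY

attribute [local instance] LieRing.ofAssociativeRing

theorem exists_equiv_ker_transAdd (T P : Matrix n n ℂ) [Invertible P] (hP : Pᵀ * T * P = 1) :
    ∃ e : LinearMap.ker (skewPair T) ≃ₗ[ℂ] LinearMap.ker (transAdd (n := n)),
      ∀ X, (e X : Matrix n n ℂ) = P⁻¹ * X * P := by
  have h₁ := ker_skewPair T
  have h₂ : (skewAdjointMatricesLieSubalgebra (Pᵀ * T * P)).toSubmodule =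
      LinearMap.ker (transAdd (n := n)) := by rw [hP, ker_transAdd]; rfl
  let f := skewAdjointMatricesLieSubalgebraEquiv T P ‹_›
  exact ⟨(LinearEquiv.ofEq _ _ h₁).trans (f.toLinearEquiv.trans (LinearEquiv.ofEq _ _ h₂)),
    fun X => skewAdjointMatricesLieSubalgebraEquiv_apply T P _ ⟨X, h₁.le X.2⟩⟩

end SkewAdjoint

section SymmetricInvolution

variable {n : Type*} [DecidableEq n] {T : Matrix n n ℂ}

noncomputable def sqrtInvolution (T : Matrix n n ℂ) : Matrix n n ℂ :=
  ((1 + Complex.I) / 2) • (1 - Complex.I • T)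

theorem transpose_sqrtInvolution (hT : Tᵀ = T) : (sqrtInvolution T)ᵀ = sqrtInvolution T := by
  rw [sqrtInvolution, Matrix.transpose_smul, Matrix.transpose_sub, Matrix.transpose_smul,
    Matrix.transpose_one, hT]

variable [Fintype n]

theorem sqrtInvolution_mul_self (hT2 : T * T = 1) :
    sqrtInvolution T * sqrtInvolution T = T := by
  simp only [sqrtInvolution, Matrix.smul_mul, Matrix.mul_smul, Matrix.sub_mul, Matrix.mul_sub,
    Matrix.one_mul, Matrix.mul_one, hT2, smul_smul, smul_sub]
  match_scalars
  · linear_combination ((1 + Complex.I) / 2) ^ 2 * Complex.I_sq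
  · linear_combination (-Complex.I / 2 - 1) * Complex.I_sq

theorem sqrtInvolution_mul_involution (hT2 : T * T = 1) :
    sqrtInvolution T * (sqrtInvolution T * T) = 1 := by
  rw [← Matrix.mul_assoc, sqrtInvolution_mul_self hT2, hT2]

theorem transpose_sqrtInvolution_mul_mul (hT : Tᵀ = T) (hT2 : T * T = 1) :
    (sqrtInvolution T)ᵀ * T * sqrtInvolution T = 1 := by
  set V := sqrtInvolution T
  calc Vᵀ * T * V = V * (V * V) * V := by
        rw [transpose_sqrtInvolution hT, sqrtInvolution_mul_self hT2]
    _ = (V * V) * (V * V) := by noncomm_ring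
    _ = 1 := by rw [sqrtInvolution_mul_self hT2, hT2]

theorem exists_equiv_ker_transAdd_of_involution (hT : Tᵀ = T) (hT2 : T * T = 1) :
    ∃ e : LinearMap.ker (skewPair T) ≃ₗ[ℂ] LinearMap.ker (transAdd (n := n)),
      ∀ X Y : LinearMap.ker (skewPair T), ∃ Z : LinearMap.ker (skewPair T),
        (Z : Matrix n n ℂ) = X * Y - Y * X ∧
        (e Z : Matrix n n ℂ) = e X * e Y - e Y * e X := by
  set V := sqrtInvolution T
  let _ : Invertible V := invertibleOfRightInverse _ _ (sqrtInvolution_mul_involution hT2)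
  obtain ⟨e, he⟩ := exists_equiv_ker_transAdd T V (transpose_sqrtInvolution_mul_mul hT hT2)
  refine ⟨e, fun X Y => ⟨⟨_, commutator_mem_ker_skewPair X.2 Y.2⟩, rfl, ?_⟩⟩
  have hV : V * V⁻¹ = 1 := Matrix.mul_inv_of_invertible V
  simp only [he]
  calc V⁻¹ * (X * Y - Y * X) * V
      = V⁻¹ * X * (V * V⁻¹) * Y * V - V⁻¹ * Y * (V * V⁻¹) * X * V := by
        rw [hV]; noncomm_ring
    _ = _ := by noncomm_ring

end SymmetricInvolution

theorem apply_swap_of_mem_ker_transAdd {n : Type*} {X : Matrix n n ℂ}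
    (hX : X ∈ LinearMap.ker (transAdd (n := n))) (i j : n) : X j i = -X i j :=
  eq_neg_of_add_eq_zero_left (congrFun (congrFun hX i) j)

section SkewSymmetric

variable {n : Type*} [LinearOrder n]

def skewEntries :
    LinearMap.ker (transAdd (n := n)) →ₗ[ℂ] ({z : Sym2 n // ¬z.IsDiag} → ℂ) where
  toFun X z := (X : Matrix n n ℂ) z.1.inf z.1.sup
  map_add' _ _ := rfl
  map_smul' _ _ := rfl

theorem skewEntries_injective : Function.Injective (skewEntries (n := n)) := by
  refine (injective_iff_map_eq_zero _).2 fun X hX => ?_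
  suffices (X : Matrix n n ℂ) = 0 from Subtype.ext this
  ext i j
  rw [Matrix.zero_apply]
  have hskew := apply_swap_of_mem_ker_transAdd X.2
  have upper : ∀ a b : n, a < b → (X : Matrix n n ℂ) a b = 0 := fun a b hab => by
    have h := congrFun hX ⟨s(a, b), by simp [hab.ne]⟩
    change (X : Matrix n n ℂ) (min a b) (max a b) = 0 at h
    rwa [min_eq_left hab.le, max_eq_right hab.le] at h
  rcases lt_trichotomy i j with h | rfl | h
  · exact upper i j h
  · linear_combination hskew i i / 2
  · rw [hskew, upper j i h, neg_zero]

theorem skewEntries_surjective : Function.Surjective (skewEntries (n := n)) := by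
  intro f
  let g : Sym2 n → ℂ := fun z => if h : z.IsDiag then 0 else f ⟨z, h⟩
  have hg : ∀ i, g s(i, i) = 0 := fun i => dif_pos (Sym2.mk_isDiag_iff.2 rfl)
  let Y : Matrix n n ℂ := Matrix.of fun i j => if i < j then g s(i, j) else -g s(i, j)
  have hY : Y ∈ LinearMap.ker (transAdd (n := n)) := by
    ext i j
    change Y j i + Y i j = 0
    simp only [Y, Matrix.of_apply, Sym2.eq_swap (a := j)]
    rcases lt_trichotomy i j with h | rfl | h
    · simp [h, h.not_gt]
    · simp [hg]
    · simp [h, h.not_gt]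
  refine ⟨⟨Y, hY⟩, funext fun ⟨z, hz⟩ => ?_⟩
  induction z using Sym2.ind with
  | h a b =>
    have hab : a ≠ b := fun h => hz (Sym2.mk_isDiag_iff.2 h)
    change Y (min a b) (max a b) = f ⟨s(a, b), hz⟩
    rcases hab.lt_or_gt with h | h
    · simp [Y, g, h, h.le, hab]
    · simp [Y, g, h, h.le, Sym2.eq_swap, hab.symm]

theorem finrank_ker_transAdd_of_linearOrder [Fintype n] :
    Module.finrank ℂ (LinearMap.ker (transAdd (n := n))) =
      Fintype.card n * (Fintype.card n - 1) / 2 := by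
  rw [(LinearEquiv.ofBijective _ ⟨skewEntries_injective, skewEntries_surjective⟩).finrank_eq,
    Module.finrank_fintype_fun_eq_card, Sym2.card_subtype_not_diag, Nat.choose_two_right]

end SkewSymmetric

theorem finrank_ker_transAdd {n : Type*} [Fintype n] :
    Module.finrank ℂ (LinearMap.ker (transAdd (n := n))) =
      Fintype.card n * (Fintype.card n - 1) / 2 :=
  -- any linear order will do: it only orients the off-diagonal pairs
  let _ : LinearOrder n := LinearOrder.lift' _ (Fintype.equivFin n).injective
  finrank_ker_transAdd_of_linearOrder

theorem Matrix.zpow_eq_of_map_add {n R : Type*} [Fintype n] [DecidableEq n] [CommRing R]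
    {A : Matrix n n R} {f : ℤ → Matrix n n R} (hf : ∀ a b, f (a + b) = f a * f b)
    (h0 : f 0 = 1) (h1 : f 1 = A) (k : ℤ) : A ^ k = f k := by
  have hinv : A * f (-1) = 1 := by rw [← h1, ← hf, add_neg_cancel, h0]
  have hA : IsUnit A.det := Matrix.isUnit_det_of_right_inverse hinv
  induction k using Int.induction_on with
  | zero => rw [zpow_zero, h0]
  | succ k ih => rw [Matrix.zpow_add_one hA, ih, hf, h1]
  | pred k ih =>
    rw [Matrix.zpow_sub_one hA, ih, sub_eq_add_neg, hf, Matrix.inv_eq_right_inv hinv]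

section CyclicMatrices

open ZMod

variable (l : ℕ) [NeZero l]

theorem zetaL_zpow (k : ℤ) : zetaL l ^ k = stdAddChar (k : ZMod l) := by
  rw [stdAddChar_coe, zetaL, ← Complex.exp_int_mul]
  ring_nf

theorem zetaL_pow (k : ℕ) : zetaL l ^ k = stdAddChar (k : ZMod l) := by
  exact_mod_cast zetaL_zpow l k

omit [NeZero l] in
theorem omegaL_ne_zero : omegaL l ≠ 0 := Complex.exp_ne_zero _

omit [NeZero l] in
theorem omegaL_zpow_two_mul (k : ℤ) : omegaL l ^ (2 * k) = zetaL l ^ k := by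
  rw [_root_.zpow_mul, omegaL, zetaL, zpow_ofNat, ← Complex.exp_nat_mul]
  ring_nf

theorem Pmat_zpow (m : ℤ) :
    Pmat l ^ m = Matrix.of fun i j : ZMod l => if j = i + (m : ZMod l) then (1 : ℂ) else 0 := by
  apply Matrix.zpow_eq_of_map_add
  · intro a b
    ext i j
    simp only [Matrix.mul_apply, Matrix.of_apply, ite_mul, one_mul, zero_mul,
      Finset.sum_ite_eq', Finset.mem_univ, if_true, Int.cast_add, add_assoc]
  · ext i j
    simp [Matrix.one_apply, eq_comm]
  · ext i j
    simp [Pmat]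

theorem Qmat_zpow (r : ℤ) :
    Qmat l ^ r = Matrix.diagonal fun i : ZMod l => stdAddChar ((r : ZMod l) * (i + 1)) := by
  apply Matrix.zpow_eq_of_map_add
  · intro a b
    rw [Matrix.diagonal_mul_diagonal]
    simp [add_mul, AddChar.map_add_eq_mul]
  · simp
  · ext i j
    simp [Qmat, Matrix.diagonal, zetaL_pow]

theorem Qmat_zpow_mul_Pmat_zpow_apply (r m : ℤ) (i j : ZMod l) :
    (Qmat l ^ r * Pmat l ^ m) i j =
      if j = i + m then stdAddChar ((r : ZMod l) * (i + 1)) else 0 := by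
  rw [Qmat_zpow, Pmat_zpow, Matrix.diagonal_mul, Matrix.of_apply, mul_ite, mul_one, mul_zero]

theorem amat_apply (r m : ℤ) (i j : ZMod l) :
    amat l r m i j =
      if j = i + m then omegaL l ^ (r * m) * stdAddChar ((r : ZMod l) * (i + 1)) else 0 := by
  rw [amat, Matrix.smul_apply, Qmat_zpow_mul_Pmat_zpow_apply, smul_eq_mul, mul_ite, mul_zero]

end CyclicMatrices

section Antidiagonal

variable {l : ℕ} [NeZero l]

theorem Tmat_apply (i j : ZMod l) : Tmat l i j = if j = -(i + 1) then 1 else 0 := by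
  have key : i.val + j.val + 1 = l ↔ j = -(i + 1) := by
    have hcast : ((i.val + j.val + 1 : ℕ) : ZMod l) = j + (i + 1) := by
      push_cast [ZMod.natCast_zmod_val]
      ring
    rw [eq_neg_iff_add_eq_zero, ← hcast, ZMod.natCast_eq_zero_iff]
    refine ⟨fun h => ⟨1, by rw [h, mul_one]⟩,
      fun h => Nat.eq_of_dvd_of_lt_two_mul (by omega) h ?_⟩
    have := i.val_lt
    have := j.val_lt
    omega
  simp only [Tmat, Matrix.of_apply, key]

theorem Tmat_mul_apply (X : MatL l) (i j : ZMod l) : (Tmat l * X) i j = X (-(i + 1)) j := by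
  simp [Matrix.mul_apply, Tmat_apply]

theorem mul_Tmat_apply (X : MatL l) (i j : ZMod l) : (X * Tmat l) i j = X i (-(j + 1)) := by
  have h : ∀ k : ZMod l, j = -(k + 1) ↔ k = -(j + 1) := fun k => by
    constructor <;> rintro rfl <;> ring
  simp only [Matrix.mul_apply, Tmat_apply, mul_ite, mul_one, mul_zero, h, Finset.sum_ite_eq',
    Finset.mem_univ, if_true]

theorem transpose_Tmat : (Tmat l)ᵀ = Tmat l := by
  ext i j
  rw [Matrix.transpose_apply, Tmat_apply, Tmat_apply]
  exact if_congr ⟨fun h => by rw [h]; ring, fun h => by rw [h]; ring⟩ rfl rfl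

theorem Tmat_mul_self : Tmat l * Tmat l = 1 := by
  ext i j
  rw [Tmat_mul_apply, Tmat_apply, Matrix.one_apply]
  exact if_congr ⟨fun h => by rw [h]; ring, fun h => by rw [← h]; ring⟩ rfl rfl

theorem Tmat_mul_transpose_mul_Tmat_apply (X : MatL l) (i j : ZMod l) :
    (Tmat l * Xᵀ * Tmat l) i j = X (-(j + 1)) (-(i + 1)) := by
  rw [mul_Tmat_apply, Tmat_mul_apply, Matrix.transpose_apply]

end Antidiagonal

section WeylBasis

open ZMod

variable {l : ℕ} [NeZero l]

theorem Tmat_mul_transpose_amat_mul_Tmat (r m : ℤ) :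
    Tmat l * (amat l r m)ᵀ * Tmat l = zetaL l ^ r • amat l (-r) m := by
  ext i j
  rw [Tmat_mul_transpose_mul_Tmat_apply, Matrix.smul_apply, amat_apply, amat_apply, smul_eq_mul]
  have hcond : -(i + 1) = -(j + 1) + (m : ZMod l) ↔ j = i + m :=
    ⟨fun h => by linear_combination h, fun h => by rw [h]; ring⟩
  rw [if_congr hcond rfl rfl]
  split_ifs with h
  · subst h
    have harg : (r : ZMod l) * (-(i + m + 1) + 1) =
        ((-r : ℤ) : ZMod l) * (i + 1) + (r : ℤ) + ((-(r * m) : ℤ) : ZMod l) := by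
      push_cast
      ring
    have hω : omegaL l ^ (r * m) * omegaL l ^ (2 * -(r * m)) = omegaL l ^ (-r * m) := by
      rw [← zpow_add₀ (omegaL_ne_zero l)]
      ring_nf
    rw [harg, AddChar.map_add_eq_mul, AddChar.map_add_eq_mul, ← zetaL_zpow, ← zetaL_zpow,
      ← omegaL_zpow_two_mul l (-(r * m))]
    linear_combination stdAddChar (((-r : ℤ) : ZMod l) * (i + 1)) * zetaL l ^ r * hω
  · rw [mul_zero]

theorem skewPart_amat (r m : ℤ) : skewPart (Tmat l) (amat l r m) = dmat l r m := by
  change amat l r m - Tmat l * (amat l r m)ᵀ * Tmat l = _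
  rw [Tmat_mul_transpose_amat_mul_Tmat, dmat]

theorem single_eq_sum_smul_Qmat_zpow_mul_Pmat_zpow (a b : ZMod l) :
    Matrix.single a b 1 = ∑ r : ZMod l,
      ((l : ℂ)⁻¹ * stdAddChar (-(r * (a + 1)))) •
        (Qmat l ^ (r.val : ℤ) * Pmat l ^ ((b - a).val : ℤ)) := by
  have hchar : ∀ r i : ZMod l,
      stdAddChar (-(r * (a + 1))) * stdAddChar (r * (i + 1)) = stdAddChar (r * (i - a)) :=
    fun r i => by rw [← AddChar.map_add_eq_mul]; ring_nf
  ext i j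
  simp only [Matrix.sum_apply, Matrix.smul_apply, Qmat_zpow_mul_Pmat_zpow_apply, Int.cast_natCast,
    natCast_zmod_val, smul_eq_mul, mul_ite, mul_zero, Matrix.single_apply]
  by_cases h : j = i + (b - a)
  · simp only [h, if_true, mul_assoc, hchar, ← Finset.mul_sum,
      AddChar.sum_mulShift _ (isPrimitive_stdAddChar l), ZMod.card, sub_eq_zero]
    by_cases hia : i = a
    · simp [hia, NeZero.ne]
    · simp [hia, Ne.symm hia]
  · simp only [h, if_false, Finset.sum_const_zero]
    rw [if_neg]
    rintro ⟨rfl, rfl⟩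
    exact h (by ring)

theorem span_amat : Submodule.span ℂ {X : MatL l | ∃ r m : ℤ, X = amat l r m} = ⊤ := by
  refine eq_top_iff.2 fun X _ => ?_
  rw [Matrix.matrix_eq_sum_single X]
  refine Submodule.sum_mem _ fun a _ => Submodule.sum_mem _ fun b _ => ?_
  rw [← mul_one (X a b), ← smul_eq_mul, ← Matrix.smul_single,
    single_eq_sum_smul_Qmat_zpow_mul_Pmat_zpow]
  refine Submodule.smul_mem _ _ <| Submodule.sum_mem _ fun r _ => Submodule.smul_mem _ _ ?_
  rw [← inv_smul_smul₀ (zpow_ne_zero ((r.val : ℤ) * (b - a).val) (omegaL_ne_zero l))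
    (Qmat l ^ _ * Pmat l ^ _)]
  exact Submodule.smul_mem _ _ <| Submodule.subset_span ⟨_, _, rfl⟩

theorem span_dmat :
    Submodule.span ℂ {X : MatL l | ∃ r m : ℤ, X = dmat l r m} =
      LinearMap.ker (skewPair (Tmat l)) := by
  have himage : skewPart (Tmat l) '' {X | ∃ r m : ℤ, X = amat l r m} =
      {X | ∃ r m : ℤ, X = dmat l r m} := by
    ext X
    simp [skewPart_amat, eq_comm]
  rw [← range_skewPart transpose_Tmat Tmat_mul_self, LinearMap.range_eq_map, ← span_amat, Submodule.map_span, himage]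

end WeylBasis

theorem stmt19_general (l : ℕ) [NeZero l] :
    -- the span of the `d_{r,m}` is exactly `{X : Xᵀ T = −T X}`
    Submodule.span ℂ {X : MatL l | ∃ r m : ℤ, X = dmat l r m} =
      LinearMap.ker (skewPair (Tmat l)) ∧
    -- this space is a Lie subalgebra of `gl_l(ℂ)` ...
    (∀ X Y : MatL l, X ∈ LinearMap.ker (skewPair (Tmat l)) →
      Y ∈ LinearMap.ker (skewPair (Tmat l)) →
      X * Y - Y * X ∈ LinearMap.ker (skewPair (Tmat l))) ∧
    -- ... of dimension l(l−1)/2 ...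
    Module.finrank ℂ (LinearMap.ker (skewPair (Tmat l))) = l * (l - 1) / 2 ∧
    -- ... isomorphic as a complex Lie algebra to `so(l,ℂ) = {X : Xᵀ = −X}`
    ∃ e : LinearMap.ker (skewPair (Tmat l)) ≃ₗ[ℂ] LinearMap.ker (transAdd (n := ZMod l)),
      ∀ X Y : LinearMap.ker (skewPair (Tmat l)),
        ∃ Z : LinearMap.ker (skewPair (Tmat l)),
          (Z : MatL l) = (X : MatL l) * Y - (Y : MatL l) * X ∧
          (e Z : MatL l) = (e X : MatL l) * (e Y) - (e Y : MatL l) * (e X) := by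
  obtain ⟨e, he⟩ :=
    exists_equiv_ker_transAdd_of_involution (transpose_Tmat (l := l)) Tmat_mul_self
  refine ⟨span_dmat, fun X Y => commutator_mem_ker_skewPair, ?_, e, he⟩
  rw [e.finrank_eq, finrank_ker_transAdd, ZMod.card]

theorem stmt19 (l : ℕ) [NeZero l] (hl2 : 2 ≤ l) :
    -- the span of the `d_{r,m}` is exactly `{X : Xᵀ T = −T X}`
    Submodule.span ℂ {X : MatL l | ∃ r m : ℤ, X = dmat l r m} =
      LinearMap.ker (skewPair (Tmat l)) ∧
    -- this space is a Lie subalgebra of `gl_l(ℂ)` ...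
    (∀ X Y : MatL l, X ∈ LinearMap.ker (skewPair (Tmat l)) →
      Y ∈ LinearMap.ker (skewPair (Tmat l)) →
      X * Y - Y * X ∈ LinearMap.ker (skewPair (Tmat l))) ∧
    -- ... of dimension l(l−1)/2 ...
    Module.finrank ℂ (LinearMap.ker (skewPair (Tmat l))) = l * (l - 1) / 2 ∧
    -- ... isomorphic as a complex Lie algebra to `so(l,ℂ) = {X : Xᵀ = −X}`
    ∃ e : LinearMap.ker (skewPair (Tmat l)) ≃ₗ[ℂ] LinearMap.ker (transAdd (n := ZMod l)),
      ∀ X Y : LinearMap.ker (skewPair (Tmat l)),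
        ∃ Z : LinearMap.ker (skewPair (Tmat l)),
          (Z : MatL l) = (X : MatL l) * Y - (Y : MatL l) * X ∧
          (e Z : MatL l) = (e X : MatL l) * (e Y) - (e Y : MatL l) * (e X) :=
  stmt19_general l
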